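/- arXiv:2509.06959 — 3 statements merged into one kernel-verified Lean document; each statement's English description precedes it below -/
import Mathlib

section
/- The generalized Hahn space h_d has the AK property: for every x ∈ h_d, the r-sections x^{[r]} = (x_1, …, x_r, 0, 0, …) converge to x in the norm ‖·‖_{h_d} as r → ∞. -/
/-!
Write `y_r = x^{[r]} - x`. Its difference sequence vanishes below `r - 1`, equals `x_r` at
`r - 1` and agrees with `-(x_n - x_{n+1})` from `r` on, so `‖y_r‖` is `d_{r-1} |x_r|` plus the
tail `t_r = ∑_{n ≥ r} d_n |x_n - x_{n+1}|` of the convergent series defining `‖x‖`. Since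
`x → 0`, `x_r = ∑_{n ≥ r} (x_n - x_{n+1})`, and monotonicity of `d` gives
`d_{r-1} |x_r| ≤ t_r`. Hence `‖y_r‖ ≤ 2 t_r → 0`.
-/

open Filter

noncomputable def hahnNorm (d : ℕ → ℝ) (x : ℕ → ℝ) : ℝ :=
  ∑' n, d n * |x n - x (n + 1)|

def memHahn (d : ℕ → ℝ) (x : ℕ → ℝ) : Prop :=
  Tendsto x atTop (nhds 0) ∧ Summable (fun n => d n * |x n - x (n + 1)|)

open Topology

theorem hasSum_sub_succ_of_tendsto_zero {G : Type*} [AddCommGroup G] [TopologicalSpace G]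
    [IsTopologicalAddGroup G] [T2Space G] {f : ℕ → G} (hf : Tendsto f atTop (𝓝 0))
    (hs : Summable fun n => f n - f (n + 1)) : HasSum (fun n => f n - f (n + 1)) (f 0) := by
  have hpartial :
      Tendsto (fun n => ∑ i ∈ Finset.range n, (f i - f (i + 1))) atTop (𝓝 (f 0)) := by
    simpa only [Finset.sum_range_sub', sub_zero] using tendsto_const_nhds.sub hf
  rw [tendsto_nhds_unique hpartial hs.hasSum.tendsto_sum_nat]
  exact hs.hasSum

section HahnSpace

variable {d x : ℕ → ℝ}

theorem hahnNorm_nonneg (hd : ∀ n, 0 ≤ d n) : 0 ≤ hahnNorm d x :=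
  tsum_nonneg fun n => mul_nonneg (hd n) (abs_nonneg _)

theorem hahnNorm_shift (r : ℕ) :
    hahnNorm (fun n => d (n + r)) (fun n => x (n + r)) =
      ∑' n, d (n + r) * |x (n + r) - x (n + r + 1)| := by
  simp only [hahnNorm, Nat.add_right_comm]

theorem memHahn.shift (hx : memHahn d x) (r : ℕ) :
    memHahn (fun n => d (n + r)) (fun n => x (n + r)) := by
  refine ⟨hx.1.comp (tendsto_add_atTop_nat r), ?_⟩
  simpa only [Nat.add_right_comm] using (summable_nat_add_iff r).mpr hx.2

theorem tendsto_hahnNorm_shift :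
    Tendsto (fun r => hahnNorm (fun n => d (n + r)) (fun n => x (n + r))) atTop (𝓝 0) := by
  simpa only [hahnNorm_shift] using tendsto_sum_nat_add fun n => d n * |x n - x (n + 1)|

theorem mul_abs_le_hahnNorm (hd0 : 0 < d 0) (hd : Monotone d) (hx : memHahn d x) :
    d 0 * |x 0| ≤ hahnNorm d x := by
  have hweight : ∀ n, d 0 * |x n - x (n + 1)| ≤ d n * |x n - x (n + 1)| := fun n =>
    mul_le_mul_of_nonneg_right (hd n.zero_le) (abs_nonneg _)
  have habs : Summable fun n => |x n - x (n + 1)| := by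
    refine (hx.2.mul_left (d 0)⁻¹).of_nonneg_of_le (fun n => abs_nonneg _) fun n => ?_
    rw [inv_mul_eq_div, le_div_iff₀' hd0]
    exact hweight n
  have htelescope := hasSum_sub_succ_of_tendsto_zero hx.1 habs.of_abs
  calc d 0 * |x 0| = d 0 * ‖∑' n, (x n - x (n + 1))‖ := by
        rw [htelescope.tsum_eq, Real.norm_eq_abs]
    _ ≤ d 0 * ∑' n, |x n - x (n + 1)| := by
        gcongr
        exact norm_tsum_le_tsum_norm habs
    _ = ∑' n, d 0 * |x n - x (n + 1)| := tsum_mul_left.symm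
    _ ≤ hahnNorm d x := (habs.mul_left _).tsum_le_tsum hweight hx.2

theorem hahnNorm_section_succ_sub (hx : memHahn d x) (m : ℕ) :
    hahnNorm d (fun n => (if n < m + 1 then x n else 0) - x n) =
      d m * |x (m + 1)| + hahnNorm (fun n => d (n + (m + 1))) (fun n => x (n + (m + 1))) := by
  set y : ℕ → ℝ := fun n => (if n < m + 1 then x n else 0) - x n
  have htail : ∀ k, d (k + (m + 1)) * |y (k + (m + 1)) - y (k + (m + 1) + 1)| =
      d (k + (m + 1)) * |x (k + (m + 1)) - x (k + (m + 1) + 1)| := by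
    intro k
    simp only [y, show ¬k + (m + 1) < m + 1 by omega, show ¬k + (m + 1) + 1 < m + 1 by omega,
      if_false, zero_sub, sub_neg_eq_add, neg_add_eq_sub, abs_sub_comm]
  have hsummable : Summable fun n => d n * |y n - y (n + 1)| :=
    (summable_nat_add_iff (m + 1)).mp <|
      (((hx.shift (m + 1)).2).congr fun k => by
        simp only [Nat.add_right_comm k 1]
        exact (htail k).symm)
  have hhead : ∑ i ∈ Finset.range (m + 1), d i * |y i - y (i + 1)| = d m * |x (m + 1)| := by
    have hzero : ∀ i ∈ Finset.range m, d i * |y i - y (i + 1)| = 0 := fun i hi => by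
      have hi : i < m := Finset.mem_range.mp hi
      simp [y, hi, hi.le]
    rw [Finset.sum_range_succ, Finset.sum_eq_zero hzero]
    simp [y]
  rw [hahnNorm, ← hsummable.sum_add_tsum_nat_add (m + 1), hhead, hahnNorm_shift, tsum_congr htail]

theorem hahnNorm_section_sub_le (hd_pos : ∀ n, 0 < d n) (hd_mono : Monotone d)
    (hx : memHahn d x) (r : ℕ) :
    hahnNorm d (fun n => (if n < r then x n else 0) - x n) ≤
      2 * hahnNorm (fun n => d (n + r)) (fun n => x (n + r)) := by
  have htail_nonneg : 0 ≤ hahnNorm (fun n => d (n + r)) (fun n => x (n + r)) :=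
    hahnNorm_nonneg fun n => (hd_pos _).le
  cases r with
  | zero =>
    have hneg : hahnNorm d (fun n => (if n < 0 then x n else 0) - x n) = hahnNorm d x :=
      tsum_congr fun n => by
        simp only [Nat.not_lt_zero, if_false, zero_sub, neg_sub_neg, abs_sub_comm]
    simp only [Nat.add_zero] at htail_nonneg ⊢
    rw [hneg]
    linarith
  | succ m =>
    have hshift_mono : Monotone fun n => d (n + (m + 1)) :=
      hd_mono.comp fun _ _ h => Nat.add_le_add_right h (m + 1)
    have hhead := mul_abs_le_hahnNorm (hd_pos (0 + (m + 1))) hshift_mono (hx.shift (m + 1))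
    simp only [zero_add] at hhead
    have hweight : d m * |x (m + 1)| ≤ d (m + 1) * |x (m + 1)| :=
      mul_le_mul_of_nonneg_right (hd_mono m.le_succ) (abs_nonneg _)
    rw [hahnNorm_section_succ_sub hx]
    linarith

end HahnSpace

/-- The generalized Hahn space has the AK property: the `r`-sections
`x^{[r]} = (x_1, …, x_r, 0, 0, …)` converge to `x` in the norm of `h_d`. -/
theorem stmt3 (d : ℕ → ℝ) (hd_pos : ∀ n, 0 < d n) (hd_mono : Monotone d)
    (x : ℕ → ℝ) (hx : memHahn d x) :
    Tendsto (fun r : ℕ => hahnNorm d (fun n => (if n < r then x n else 0) - x n))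
      atTop (nhds 0) :=
  squeeze_zero (fun _ => hahnNorm_nonneg fun n => (hd_pos n).le)
    (hahnNorm_section_sub_le hd_pos hd_mono hx)
    (by simpa using tendsto_hahnNorm_shift.const_mul 2)
end

section
/- Every Meir–Keeler condensing operator on a nonempty, bounded, closed, convex subset D of a Banach space, with respect to a measure of noncompactness ψ, maps the inductively defined decreasing sequence D_0 = D, D_{n+1} = conv(closure(H(D_n))) to sets whose ψ-values form a decreasing sequence converging to 0; hence the intersection ∩ D_n is a nonempty compact convex set invariant under H. -/
open Filter

/-- The inductively defined sequence `D₀ = D`, `D_{n+1} = conv(closure(H(Dₙ)))`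
(closed convex hull of the image). -/
noncomputable def iterSets {Ω : Type*} [NormedAddCommGroup Ω] [NormedSpace ℝ Ω]
    (H : Ω → Ω) (D : Set Ω) : ℕ → Set Ω
  | 0 => D
  | n + 1 => closure (convexHull ℝ (H '' iterSets H D n))

/-- For a Meir–Keeler condensing operator `H` on a nonempty bounded closed convex
set `D`, the sets `Dₙ` are decreasing, `ψ(Dₙ)` decreases to `0`, and `⋂ Dₙ` is a
nonempty compact convex set invariant under `H`. -/
theorem stmt10 {Ω : Type*} [NormedAddCommGroup Ω] [NormedSpace ℝ Ω]
    [CompleteSpace Ω]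
    (ψ : Set Ω → ℝ) (D : Set Ω)
    (hD_ne : D.Nonempty) (hD_bdd : Bornology.IsBounded D) (hD_cl : IsClosed D)
    (hD_cx : Convex ℝ D)
    (hψ_nonneg : ∀ A : Set Ω, 0 ≤ ψ A)
    (hψ_ker : ∀ A : Set Ω, Bornology.IsBounded A → ψ A = 0 → IsCompact (closure A))
    (hψ_mono : ∀ A B : Set Ω, A ⊆ B → ψ A ≤ ψ B)
    (hψ_closure : ∀ A : Set Ω, ψ (closure A) = ψ A)
    (hψ_conv : ∀ A : Set Ω, ψ (convexHull ℝ A) = ψ A)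
    (hψ_cantor : ∀ C : ℕ → Set Ω, (∀ n, (C n).Nonempty) → (∀ n, IsClosed (C n)) →
      (∀ n, C (n + 1) ⊆ C n) → Tendsto (fun n => ψ (C n)) atTop (nhds 0) →
      (⋂ n, C n).Nonempty)
    (H : Ω → Ω) (hH : Set.MapsTo H D D)
    (hMK : ∀ ε : ℝ, 0 < ε → ∃ δ : ℝ, 0 < δ ∧ ∀ A : Set Ω, A ⊆ D →
      ε ≤ ψ A → ψ A < ε + δ → ψ (H '' A) < ε) :
    (∀ n, iterSets H D (n + 1) ⊆ iterSets H D n) ∧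
    Antitone (fun n => ψ (iterSets H D n)) ∧
    Tendsto (fun n => ψ (iterSets H D n)) atTop (nhds 0) ∧
    (⋂ n, iterSets H D n).Nonempty ∧
    IsCompact (⋂ n, iterSets H D n) ∧
    Convex ℝ (⋂ n, iterSets H D n) ∧
    Set.MapsTo H (⋂ n, iterSets H D n) (⋂ n, iterSets H D n) := by

  -- Each `Dₙ` is contained in `D`.
  have hsubD : ∀ n, iterSets H D n ⊆ D := by
    intro n
    induction n with
    | zero => exact le_refl D
    | succ n ih =>
      have h1 : H '' iterSets H D n ⊆ D := by
        intro x hx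
        obtain ⟨y, hy, rfl⟩ := hx
        exact hH (ih hy)
      exact closure_minimal (convexHull_min h1 hD_cx) hD_cl
  -- The sequence is decreasing.
  have hdec : ∀ n, iterSets H D (n + 1) ⊆ iterSets H D n := by
    intro n
    induction n with
    | zero => exact hsubD 1
    | succ n ih =>
      exact closure_mono (convexHull_mono (Set.image_mono (f := H) ih))
  -- Each `Dₙ` is nonempty.
  have hne : ∀ n, (iterSets H D n).Nonempty := by
    intro n
    induction n with
    | zero => exact hD_ne
    | succ n ih =>
      obtain ⟨x, hx⟩ := ih
      exact ⟨H x, subset_closure (subset_convexHull ℝ _ ⟨x, hx, rfl⟩)⟩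
  -- Each `Dₙ` is closed.
  have hcl : ∀ n, IsClosed (iterSets H D n) := by
    intro n
    cases n with
    | zero => exact hD_cl
    | succ n => exact isClosed_closure
  -- Each `Dₙ` is convex.
  have hcx : ∀ n, Convex ℝ (iterSets H D n) := by
    intro n
    cases n with
    | zero => exact hD_cx
    | succ n => exact (convex_convexHull ℝ _).closure
  -- ψ of the successor set equals ψ of the image.
  have hψeq : ∀ n, ψ (iterSets H D (n + 1)) = ψ (H '' iterSets H D n) := by
    intro n
    show ψ (closure (convexHull ℝ (H '' iterSets H D n))) = _
    rw [hψ_closure, hψ_conv]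
  -- Antitone.
  have hanti : Antitone (fun n => ψ (iterSets H D n)) := by
    apply antitone_nat_of_succ_le
    intro n
    exact hψ_mono _ _ (hdec n)
  -- The sequence converges to its infimum.
  have hbdd : BddBelow (Set.range fun n => ψ (iterSets H D n)) :=
    ⟨0, by rintro x ⟨n, rfl⟩; exact hψ_nonneg _⟩
  have htend' : Tendsto (fun n => ψ (iterSets H D n)) atTop
      (nhds (⨅ n, ψ (iterSets H D n))) :=
    tendsto_atTop_ciInf hanti hbdd
  set L := ⨅ n, ψ (iterSets H D n) with hL
  have hLge : ∀ n, L ≤ ψ (iterSets H D n) := fun n => ciInf_le (f := fun m : ℕ => ψ (iterSets H D m)) hbdd n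
  have hL0 : L = 0 := by
    by_contra hne0
    have hLpos : 0 < L := by
      rcases lt_or_eq_of_le (le_ciInf (f := fun m : ℕ => ψ (iterSets H D m)) fun n => hψ_nonneg _) with h | h
      · exact h
      · exact absurd h.symm hne0
    obtain ⟨δ, hδpos, hδ⟩ := hMK L hLpos
    have : ∃ n, ψ (iterSets H D n) < L + δ := by
      by_contra hcon
      push_neg at hcon
      have : L + δ ≤ L := le_ciInf (f := fun m : ℕ => ψ (iterSets H D m)) hcon
      linarith
    obtain ⟨n, hn⟩ := this
    have h1 : ψ (H '' iterSets H D n) < L :=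
      hδ _ (hsubD n) (hLge n) hn
    have h2 : L ≤ ψ (H '' iterSets H D n) := by
      rw [← hψeq n]; exact hLge (n + 1)
    linarith
  have htend : Tendsto (fun n => ψ (iterSets H D n)) atTop (nhds 0) := by
    rw [← hL0]; exact htend'
  -- Nonempty intersection.
  have hIne : (⋂ n, iterSets H D n).Nonempty :=
    hψ_cantor _ hne hcl hdec htend
  -- ψ of the intersection is 0.
  have hψI : ψ (⋂ n, iterSets H D n) = 0 := by
    have hle : ∀ n, ψ (⋂ n, iterSets H D n) ≤ ψ (iterSets H D n) := fun n =>
      hψ_mono _ _ (Set.iInter_subset _ n)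
    have h1 : ψ (⋂ n, iterSets H D n) ≤ 0 :=
      ge_of_tendsto' htend hle
    linarith [hψ_nonneg (⋂ n, iterSets H D n)]
  have hIcl : IsClosed (⋂ n, iterSets H D n) := isClosed_iInter hcl
  have hIcpt : IsCompact (⋂ n, iterSets H D n) := by
    have := hψ_ker _ (hD_bdd.subset ((Set.iInter_subset _ 0).trans (hsubD 0))) hψI
    rwa [hIcl.closure_eq] at this
  refine ⟨hdec, hanti, htend, hIne, hIcpt, convex_iInter fun n => hcx n, ?_⟩
  intro x hx
  simp only [Set.mem_iInter] at hx ⊢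
  intro n
  cases n with
  | zero => exact hH (hx 0)
  | succ n =>
    exact subset_closure (subset_convexHull ℝ _ ⟨x, hx n, rfl⟩)
end

section
/- For a bounded, equicontinuous family Y of continuous functions from [0,1] into a Banach space, and for each ξ ∈ [0,1], the Hausdorff measure of noncompactness satisfies χ(∫₀^ξ Y(s) ds) ≤ ∫₀^ξ χ(Y(s)) ds, where ∫₀^ξ Y(s) ds = {∫₀^ξ y(s) ds : y ∈ Y}. -/
open Filter intervalIntegral

noncomputable def chi {X : Type*} [PseudoMetricSpace X] (A : Set X) : ℝ :=
  sInf {ε : ℝ | 0 < ε ∧ ∃ F : Finset X, ∀ x ∈ A, ∃ y ∈ F, dist x y ≤ ε}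

lemma chi_nonneg {X : Type*} [PseudoMetricSpace X] (A : Set X) : 0 ≤ chi A :=
  Real.sInf_nonneg fun _ hx => hx.1.le

lemma chi_le {X : Type*} [PseudoMetricSpace X] {A : Set X} {r : ℝ} (hr : 0 < r)
    (F : Finset X) (hF : ∀ x ∈ A, ∃ y ∈ F, dist x y ≤ r) : chi A ≤ r :=
  csInf_le ⟨0, fun _ hx => hx.1.le⟩ ⟨hr, F, hF⟩

lemma chi_cover {X : Type*} [PseudoMetricSpace X] {A : Set X}
    (hne : ∃ r : ℝ, 0 < r ∧ ∃ F : Finset X, ∀ x ∈ A, ∃ y ∈ F, dist x y ≤ r)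
    {ε : ℝ} (hε : 0 < ε) :
    ∃ F : Finset X, ∀ x ∈ A, ∃ y ∈ F, dist x y ≤ chi A + ε := by
  obtain ⟨r, hr, F, hF⟩ := hne
  have hlt : chi A < chi A + ε := by linarith [chi_nonneg A]
  have hne' : {ε : ℝ | 0 < ε ∧ ∃ F : Finset X, ∀ x ∈ A, ∃ y ∈ F, dist x y ≤ ε}.Nonempty :=
    ⟨r, hr, F, hF⟩
  obtain ⟨a, ⟨_, G, hG⟩, ha⟩ := exists_lt_of_csInf_lt hne' hlt
  exact ⟨G, fun x hx => by
    obtain ⟨q, hq, hd⟩ := hG x hx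
    exact ⟨q, hq, hd.trans ha.le⟩⟩

/-- For a bounded equicontinuous family `Y` of continuous functions from `[0,1]`
into a Banach space and `ξ ∈ [0,1]`,
`χ(∫₀^ξ Y(s) ds) ≤ ∫₀^ξ χ(Y(s)) ds`, where `∫₀^ξ Y(s) ds = {∫₀^ξ y(s) ds : y ∈ Y}`. -/
theorem stmt13 {Ω : Type*} [NormedAddCommGroup Ω] [NormedSpace ℝ Ω]
    [CompleteSpace Ω]
    (Y : Set (ℝ → Ω)) (hY_ne : Y.Nonempty)
    (hY_cont : ∀ y ∈ Y, ContinuousOn y (Set.Icc 0 1))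
    (hY_bdd : ∃ M : ℝ, ∀ y ∈ Y, ∀ s ∈ Set.Icc (0 : ℝ) 1, ‖y s‖ ≤ M)
    (hY_eq : EquicontinuousOn (fun y : Y => (y : ℝ → Ω)) (Set.Icc 0 1))
    (hchi_cont : ContinuousOn (fun s => chi ((fun y : ℝ → Ω => y s) '' Y))
      (Set.Icc 0 1))
    (ξ : ℝ) (hξ : ξ ∈ Set.Icc (0 : ℝ) 1) :
    chi {z : Ω | ∃ y ∈ Y, z = ∫ s in (0 : ℝ)..ξ, y s} ≤
      ∫ s in (0 : ℝ)..ξ, chi ((fun y : ℝ → Ω => y s) '' Y) := by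
  classical
  obtain ⟨hξ0, hξ1⟩ := hξ
  obtain ⟨M₀, hM₀⟩ := hY_bdd
  obtain ⟨y₀, hy₀⟩ := hY_ne
  set g : ℝ → ℝ := fun s => chi ((fun y : ℝ → Ω => y s) '' Y) with hgdef
  have hgnn : ∀ s, 0 ≤ g s := fun s => chi_nonneg _
  have hIccsub : ∀ a b : ℝ, a ∈ Set.Icc (0:ℝ) 1 → b ∈ Set.Icc (0:ℝ) 1 →
      Set.uIcc a b ⊆ Set.Icc 0 1 := fun a b ha hb => Set.uIcc_subset_Icc ha hb
  have hg_int : ∀ a b : ℝ, a ∈ Set.Icc (0:ℝ) 1 → b ∈ Set.Icc (0:ℝ) 1 →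
      IntervalIntegrable g MeasureTheory.volume a b :=
    fun a b ha hb => (hchi_cont.mono (hIccsub a b ha hb)).intervalIntegrable
  have hy_int : ∀ y ∈ Y, ∀ a b : ℝ, a ∈ Set.Icc (0:ℝ) 1 → b ∈ Set.Icc (0:ℝ) 1 →
      IntervalIntegrable y MeasureTheory.volume a b :=
    fun y hy a b ha hb => ((hY_cont y hy).mono (hIccsub a b ha hb)).intervalIntegrable
  have hgI_nonneg : 0 ≤ ∫ s in (0:ℝ)..ξ, g s :=
    intervalIntegral.integral_nonneg hξ0 fun u _ => hgnn u
  -- coverings with slack exist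
  have hcov : ∀ t ∈ Set.Icc (0:ℝ) 1, ∀ ε : ℝ, 0 < ε →
      ∃ F : Finset Ω, ∀ x ∈ (fun y : ℝ → Ω => y t) '' Y, ∃ q ∈ F, dist x q ≤ g t + ε := by
    intro t ht ε hε
    refine chi_cover ⟨2 * max M₀ 0 + 1, by positivity, {y₀ t}, ?_⟩ hε
    rintro x ⟨y, hy, rfl⟩
    refine ⟨y₀ t, Finset.mem_singleton_self _, ?_⟩
    have h1 : ‖y t‖ ≤ max M₀ 0 := (hM₀ y hy t ht).trans (le_max_left _ _)
    have h2 : ‖y₀ t‖ ≤ max M₀ 0 := (hM₀ y₀ hy₀ t ht).trans (le_max_left _ _)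
    calc dist (y t) (y₀ t) ≤ ‖y t‖ + ‖y₀ t‖ := dist_le_norm_add_norm _ _
    _ ≤ 2 * max M₀ 0 + 1 := by linarith
  -- uniform equicontinuity of Y
  have hUE : ∀ ε > 0, ∃ δ > 0, ∀ a ∈ Set.Icc (0:ℝ) 1, ∀ b ∈ Set.Icc (0:ℝ) 1,
      dist a b < δ → ∀ y ∈ Y, dist (y a) (y b) < ε := by
    have h1 : Equicontinuous ((Set.Icc (0:ℝ) 1).restrict ∘ fun y : Y => (y : ℝ → Ω)) :=
      (equicontinuous_restrict_iff _).mpr hY_eq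
    have h2 := CompactSpace.uniformEquicontinuous_of_equicontinuous h1
    rw [Metric.uniformEquicontinuous_iff] at h2
    intro ε hε
    obtain ⟨δ, hδ, h⟩ := h2 ε hε
    exact ⟨δ, hδ, fun a ha b hb hab y hy =>
      h ⟨a, ha⟩ ⟨b, hb⟩ (by rwa [Subtype.dist_eq]) ⟨y, hy⟩⟩
  -- uniform continuity of g
  have hUG : ∀ ε > 0, ∃ δ > 0, ∀ a ∈ Set.Icc (0:ℝ) 1, ∀ b ∈ Set.Icc (0:ℝ) 1,
      dist a b < δ → dist (g a) (g b) < ε := by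
    have := Metric.uniformContinuousOn_iff.mp
      (isCompact_Icc.uniformContinuousOn_of_continuous hchi_cont)
    intro ε hε
    obtain ⟨δ, hδ, hd⟩ := this ε hε
    exact ⟨δ, hδ, fun a ha b hb hab => hd a ha b hb hab⟩
  refine le_of_forall_pos_le_add fun ε hε => ?_
  have hε' : 0 < ε / 4 := by linarith
  obtain ⟨δ₁, hδ₁, hE⟩ := hUE (ε / 4) hε'
  obtain ⟨δ₂, hδ₂, hGc⟩ := hUG (ε / 4) hε'
  obtain ⟨n, hn⟩ := exists_nat_one_div_lt (lt_min hδ₁ hδ₂)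
  set N : ℕ := n + 1 with hNdef
  have hN : 0 < (N : ℝ) := by positivity
  set t : ℕ → ℝ := fun i => (i : ℝ) * ξ / N with htdef
  have ht0 : t 0 = 0 := by simp [htdef]
  have htN : t N = ξ := by
    show (N:ℝ) * ξ / N = ξ
    exact mul_div_cancel_left₀ ξ hN.ne'
  have hstep : ∀ i : ℕ, t (i + 1) - t i = ξ / N := by
    intro i
    simp only [htdef]
    field_simp
    push_cast
    ring
  have hξN : 0 ≤ ξ / N := by positivity
  have hmesh : ξ / N < min δ₁ δ₂ := by
    refine lt_of_le_of_lt ?_ hn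
    rw [div_le_div_iff₀ hN (by positivity)]
    push_cast
    nlinarith [show (N:ℝ) = n + 1 by simp [hNdef], (Nat.cast_nonneg n : (0:ℝ) ≤ n)]
  have htmem : ∀ i : ℕ, i ≤ N → t i ∈ Set.Icc (0:ℝ) 1 := by
    intro i hi
    constructor
    · simp only [htdef]; positivity
    · simp only [htdef]
      rw [div_le_one hN]
      have : (i : ℝ) ≤ N := by exact_mod_cast hi
      nlinarith
  have htle : ∀ i : ℕ, t i ≤ t (i + 1) := fun i => by linarith [hstep i, hξN]
  choose F hF using fun i : Fin N => hcov (t i) (htmem i i.2.le) (ε / 4) hε'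
  refine chi_le (r := (∫ s in (0:ℝ)..ξ, g s) + ε) (by linarith)
    ((Fintype.piFinset F).image fun f => ∑ i : Fin N, (ξ / (N:ℝ)) • f i) ?_
  rintro z ⟨y, hy, rfl⟩
  choose q hq hdq using fun i : Fin N => hF i (y (t i)) ⟨y, hy, rfl⟩
  refine ⟨∑ i : Fin N, (ξ / (N:ℝ)) • q i,
    Finset.mem_image_of_mem _ (Fintype.mem_piFinset.mpr hq), ?_⟩
  -- split integrals along the partition
  have hsplit_y : (∫ s in (0:ℝ)..ξ, y s) = ∑ i ∈ Finset.range N, ∫ s in t i..t (i + 1), y s := by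
    rw [← ht0, ← htN]
    exact (sum_integral_adjacent_intervals fun k hk =>
      hy_int y hy _ _ (htmem k (by omega)) (htmem (k + 1) (by omega))).symm
  have hsplit_g : (∫ s in (0:ℝ)..ξ, g s) = ∑ i ∈ Finset.range N, ∫ s in t i..t (i + 1), g s := by
    rw [← ht0, ← htN]
    exact (sum_integral_adjacent_intervals fun k hk =>
      hg_int _ _ (htmem k (by omega)) (htmem (k + 1) (by omega))).symm
  -- (A) Riemann sum approximates the integral of y
  have hA : ‖(∫ s in (0:ℝ)..ξ, y s) - ∑ i ∈ Finset.range N, (ξ / (N:ℝ)) • y (t i)‖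
      ≤ (ε / 4) * ξ := by
    rw [hsplit_y, ← Finset.sum_sub_distrib]
    calc ‖∑ i ∈ Finset.range N, ((∫ s in t i..t (i + 1), y s) - (ξ / (N:ℝ)) • y (t i))‖
        ≤ ∑ i ∈ Finset.range N, ‖(∫ s in t i..t (i + 1), y s) - (ξ / (N:ℝ)) • y (t i)‖ :=
          norm_sum_le _ _
      _ ≤ ∑ i ∈ Finset.range N, (ε / 4) * (ξ / N) := by
          refine Finset.sum_le_sum fun i hi => ?_
          have hiN : i < N := Finset.mem_range.mp hi
          have heq : (∫ s in t i..t (i + 1), y s) - (ξ / (N:ℝ)) • y (t i)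
              = ∫ s in t i..t (i + 1), (y s - y (t i)) := by
            rw [intervalIntegral.integral_sub
              (hy_int y hy _ _ (htmem i (by omega)) (htmem (i + 1) (by omega)))
              intervalIntegrable_const, intervalIntegral.integral_const, hstep i]
          rw [heq]
          have hb := intervalIntegral.norm_integral_le_of_norm_le_const
            (C := ε / 4) (f := fun s => y s - y (t i)) (a := t i) (b := t (i + 1)) ?_
          · rwa [hstep i, abs_of_nonneg hξN] at hb
          · intro x hx
            rw [Set.uIoc_of_le (htle i)] at hx
            have hxmem : x ∈ Set.Icc (0:ℝ) 1 := by
              have h1 := htmem i (by omega)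
              have h2 := htmem (i + 1) (by omega)
              exact ⟨le_trans h1.1 hx.1.le, le_trans hx.2 h2.2⟩
            have hdist : dist x (t i) < δ₁ := by
              rw [Real.dist_eq, abs_of_nonneg (by linarith [hx.1.le])]
              have : x - t i ≤ ξ / N := by linarith [hx.2, hstep i]
              exact lt_of_le_of_lt this (lt_of_lt_of_le hmesh (min_le_left _ _))
            have := hE x hxmem (t i) (htmem i (by omega)) hdist y hy
            rw [dist_eq_norm] at this
            exact this.le
      _ = (ε / 4) * ξ := by
          rw [Finset.sum_const, Finset.card_range, nsmul_eq_mul]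
          field_simp
  -- (B) distance between the Riemann sum and the approximating point
  have hB : dist (∑ i : Fin N, (ξ / (N:ℝ)) • y (t i)) (∑ i : Fin N, (ξ / (N:ℝ)) • q i)
      ≤ ∑ i : Fin N, (ξ / (N:ℝ)) * (g (t i) + ε / 4) := by
    refine dist_sum_sum_le_of_le _ fun i _ => ?_
    rw [dist_smul₀, Real.norm_of_nonneg hξN]
    exact mul_le_mul_of_nonneg_left (hdq i) hξN
  -- (C) Riemann sum of g is close to its integral
  have hC : ∑ i ∈ Finset.range N, (ξ / (N:ℝ)) * g (t i)
      ≤ (∫ s in (0:ℝ)..ξ, g s) + (ε / 4) * ξ := by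
    have key : ∀ i ∈ Finset.range N,
        (ξ / (N:ℝ)) * g (t i) ≤ (∫ s in t i..t (i + 1), g s) + (ε / 4) * (ξ / N) := by
      intro i hi
      have hiN : i < N := Finset.mem_range.mp hi
      have hmono : (∫ s in t i..t (i + 1), (fun _ => g (t i)) s)
          ≤ ∫ s in t i..t (i + 1), (g s + ε / 4) := by
        refine intervalIntegral.integral_mono_on (htle i) intervalIntegrable_const
          ((hg_int _ _ (htmem i (by omega)) (htmem (i + 1) (by omega))).add
            intervalIntegrable_const) fun x hx => ?_
        have hxmem : x ∈ Set.Icc (0:ℝ) 1 := by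
          have h1 := htmem i (by omega)
          have h2 := htmem (i + 1) (by omega)
          exact ⟨le_trans h1.1 hx.1, le_trans hx.2 h2.2⟩
        have hdist : dist (t i) x < δ₂ := by
          rw [Real.dist_eq, abs_of_nonpos (by linarith [hx.1])]
          have : x - t i ≤ ξ / N := by linarith [hx.2, hstep i]
          calc -(t i - x) = x - t i := by ring
          _ ≤ ξ / N := this
          _ < δ₂ := lt_of_lt_of_le hmesh (min_le_right _ _)
        have := hGc (t i) (htmem i (by omega)) x hxmem hdist
        rw [Real.dist_eq] at this
        have habs := abs_lt.mp this
        linarith [habs.1, habs.2]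
      rw [intervalIntegral.integral_const, hstep i, smul_eq_mul] at hmono
      rw [intervalIntegral.integral_add
        (hg_int _ _ (htmem i (by omega)) (htmem (i + 1) (by omega)))
        intervalIntegrable_const, intervalIntegral.integral_const, hstep i,
        smul_eq_mul] at hmono
      linarith [hmono]
    calc ∑ i ∈ Finset.range N, (ξ / (N:ℝ)) * g (t i)
        ≤ ∑ i ∈ Finset.range N, ((∫ s in t i..t (i + 1), g s) + (ε / 4) * (ξ / N)) :=
          Finset.sum_le_sum key
      _ = (∫ s in (0:ℝ)..ξ, g s) + (ε / 4) * ξ := by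
          rw [Finset.sum_add_distrib, ← hsplit_g, Finset.sum_const, Finset.card_range,
            nsmul_eq_mul]
          field_simp
  -- combine
  have hsum_eq : ∑ i : Fin N, (ξ / (N:ℝ)) • y (t i)
      = ∑ i ∈ Finset.range N, (ξ / (N:ℝ)) • y (t i) :=
    Fin.sum_univ_eq_sum_range (fun j => (ξ / (N:ℝ)) • y (t j)) N
  have hBsum : ∑ i : Fin N, (ξ / (N:ℝ)) * (g (t i) + ε / 4)
      = (∑ i ∈ Finset.range N, (ξ / (N:ℝ)) * g (t i)) + (ε / 4) * ξ := by
    rw [Fin.sum_univ_eq_sum_range (fun j => (ξ / (N:ℝ)) * (g (t j) + ε / 4)) N]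
    rw [show (fun j => (ξ / (N:ℝ)) * (g (t j) + ε / 4))
        = fun j => (ξ / (N:ℝ)) * g (t j) + (ξ / (N:ℝ)) * (ε / 4) from funext fun j => by ring]
    rw [Finset.sum_add_distrib, Finset.sum_const, Finset.card_range, nsmul_eq_mul]
    field_simp
  have htotal : dist (∫ s in (0:ℝ)..ξ, y s) (∑ i : Fin N, (ξ / (N:ℝ)) • q i)
      ≤ (∫ s in (0:ℝ)..ξ, g s) + 3 * ((ε / 4) * ξ) := by
    calc dist (∫ s in (0:ℝ)..ξ, y s) (∑ i : Fin N, (ξ / (N:ℝ)) • q i)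
        ≤ dist (∫ s in (0:ℝ)..ξ, y s) (∑ i : Fin N, (ξ / (N:ℝ)) • y (t i))
          + dist (∑ i : Fin N, (ξ / (N:ℝ)) • y (t i)) (∑ i : Fin N, (ξ / (N:ℝ)) • q i) :=
          dist_triangle _ _ _
      _ ≤ (ε / 4) * ξ + ((∑ i ∈ Finset.range N, (ξ / (N:ℝ)) * g (t i)) + (ε / 4) * ξ) := by
          refine add_le_add ?_ (hB.trans_eq hBsum)
          rw [dist_eq_norm, hsum_eq]
          exact hA
      _ ≤ (ε / 4) * ξ + (((∫ s in (0:ℝ)..ξ, g s) + (ε / 4) * ξ) + (ε / 4) * ξ) := by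
          linarith [hC]
      _ = (∫ s in (0:ℝ)..ξ, g s) + 3 * ((ε / 4) * ξ) := by ring
  refine htotal.trans ?_
  have : 3 * ((ε / 4) * ξ) ≤ ε := by nlinarith
  linarith
end
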